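/- arXiv:0812.0562 — 6 statements merged into one kernel-verified Lean document; each statement's English description precedes it below -/
import Mathlib

section
/- Let H : ℝ → Matrix n n ℂ be continuous on [μ, μ+Δλ] and P times differentiable there, and let U be the ordered exponential generated by H. Then for every integer ℓ with 0 ≤ ℓ ≤ P+1 and every s ∈ [μ, μ+Δλ], the ℓ-th derivative of s ↦ U(s,μ) exists and satisfies ∂_s^ℓ U(s,μ) = T_ℓ(s) U(s,μ), where T_0(u) = 1 and T_{p+1}(u) = T_p(u) H(u) + T_p'(u). -/
open scoped Matrix.Norms.L2Operator Topology

noncomputable section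

/-- The Suzuki coefficient `s_p = (4 - 4^{1/(2p+1)})⁻¹`. -/
def sCoef (p : ℕ) : ℝ := (4 - 4 ^ ((1 : ℝ) / (2 * p + 1)))⁻¹

variable {n : Type*} [Fintype n] [DecidableEq n]

/-- `U(x,y)` is the ordered exponential generated by `H`:
the solution of `∂ₓ U(x,y) = H(x) U(x,y)` with `U(y,y) = 1`. -/
def IsOrderedExp (H : ℝ → Matrix n n ℂ) (U : ℝ → ℝ → Matrix n n ℂ) : Prop :=
  (∀ y, U y y = 1) ∧ ∀ x y, HasDerivAt (fun s => U s y) (H x * U x y) x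

/-- The first-order (symmetrized Trotter) Lie-Trotter-Suzuki formula `U₁(x,y)`. -/
def lts1 {m : ℕ} (Hs : Fin m → ℝ → Matrix n n ℂ) (x y : ℝ) : Matrix n n ℂ :=
  (List.ofFn fun j : Fin m =>
      NormedSpace.exp (((x - y) / 2) • Hs j ((x + y) / 2))).prod *
  ((List.ofFn fun j : Fin m =>
      NormedSpace.exp (((x - y) / 2) • Hs j ((x + y) / 2))).reverse).prod

/-- Suzuki's recursive step with coefficient `s_p`, producing
`V'(y+t, y) = V(y+t, y+(1-s_p)t) V(y+(1-s_p)t, y+(1-2s_p)t) V(y+(1-2s_p)t, y+2s_p t)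
  V(y+2s_p t, y+s_p t) V(y+s_p t, y)` where `t = x - y`. -/
def suzukiStep (p : ℕ) (V : ℝ → ℝ → Matrix n n ℂ) (x y : ℝ) : Matrix n n ℂ :=
  V x (y + (1 - sCoef p) * (x - y)) *
    V (y + (1 - sCoef p) * (x - y)) (y + (1 - 2 * sCoef p) * (x - y)) *
    V (y + (1 - 2 * sCoef p) * (x - y)) (y + 2 * sCoef p * (x - y)) *
    V (y + 2 * sCoef p * (x - y)) (y + sCoef p * (x - y)) *
    V (y + sCoef p * (x - y)) y

/-- The `k`-th order Lie-Trotter-Suzuki product formula `U_k` (for `k ≥ 1`);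
`U_{p+1}` is obtained from `U_p` by Suzuki's recursive step with coefficient `s_p`. -/
def lts {m : ℕ} (Hs : Fin m → ℝ → Matrix n n ℂ) : ℕ → ℝ → ℝ → Matrix n n ℂ
  | 0 => lts1 Hs
  | 1 => lts1 Hs
  | (q + 2) => suzukiStep (q + 1) (lts Hs (q + 1))

/-- The family `{H_j}` is `P`-smooth on `[a,b]`: each `H_j` is `P` times differentiable there
(the norm of the `P`-th derivative is automatically finite). -/
def PSmoothOn {m : ℕ} (Hs : Fin m → ℝ → Matrix n n ℂ) (P : ℕ) (a b : ℝ) : Prop :=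
  ∀ j, ∀ p < P,
    DifferentiableOn ℝ (iteratedDerivWithin p (Hs j) (Set.Icc a b)) (Set.Icc a b)

/-- The family `{H_j}` is `Λ`-`P`-smooth on `[a,b]`:
it is `P`-smooth and `Λ ≥ sup_{p ≤ P} sup_{u} (∑_j ‖H_j^{(p)}(u)‖)^{1/(p+1)}`,
i.e. `∑_j ‖H_j^{(p)}(u)‖ ≤ Λ^{p+1}` for all `0 ≤ p ≤ P` and `u ∈ [a,b]`. -/
def LambdaSmoothOn {m : ℕ} (Hs : Fin m → ℝ → Matrix n n ℂ) (Λ : ℝ) (P : ℕ) (a b : ℝ) :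
    Prop :=
  PSmoothOn Hs P a b ∧ 0 ≤ Λ ∧
    ∀ p ≤ P, ∀ u ∈ Set.Icc a b,
      ∑ j, ‖iteratedDerivWithin p (Hs j) (Set.Icc a b) u‖ ≤ Λ ^ (p + 1)

/-- `Q_k`:  `Q_1 = 1/2` and `Q_k = (1/2) ∏_{j=1}^{k-1} max {s_j, |1 - 4 s_j|}`. -/
def Qk (k : ℕ) : ℝ :=
  (1 / 2) * ∏ j ∈ Finset.Icc 1 (k - 1), max (sCoef j) |1 - 4 * sCoef j|

/-- The operators `T_p`: `T_0 = 1`, `T_{p+1}(u) = T_p(u) H(u) + T_p'(u)`,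
with derivatives taken within the set `s`. -/
def Tseq (H : ℝ → Matrix n n ℂ) (s : Set ℝ) : ℕ → ℝ → Matrix n n ℂ
  | 0 => fun _ => 1
  | (p + 1) => fun u => Tseq H s p u * H u + derivWithin (Tseq H s p) s u

section

variable {𝕜 : Type*} [NontriviallyNormedField 𝕜]
  {F : Type*} [NormedAddCommGroup F] [NormedSpace 𝕜 F]
  {𝔸 : Type*} [NormedRing 𝔸] [NormedAlgebra 𝕜 𝔸]

variable (𝕜) in
/-- `k`-fold differentiability within `s`; unlike `ContDiffOn 𝕜 k f s`, no derivative needs to be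
continuous. -/
def IterDifferentiableOn : ℕ → (𝕜 → F) → Set 𝕜 → Prop
  | 0, _, _ => True
  | k + 1, f, s => DifferentiableOn 𝕜 f s ∧ IterDifferentiableOn k (derivWithin f s) s

namespace IterDifferentiableOn

variable {s : Set 𝕜}

theorem differentiableOn {k : ℕ} {f : 𝕜 → F} (hf : IterDifferentiableOn 𝕜 (k + 1) f s) :
    DifferentiableOn 𝕜 f s :=
  hf.1

theorem congr : ∀ {k : ℕ} {f g : 𝕜 → F},
    IterDifferentiableOn 𝕜 k f s → Set.EqOn f g s → IterDifferentiableOn 𝕜 k g s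
  | 0, _, _, _, _ => trivial
  | _ + 1, _, _, ⟨hf, hf'⟩, hfg =>
    ⟨hf.congr fun _ hx => (hfg hx).symm,
      hf'.congr fun _ hx => derivWithin_congr hfg (hfg hx)⟩

theorem of_succ : ∀ {k : ℕ} {f : 𝕜 → F},
    IterDifferentiableOn 𝕜 (k + 1) f s → IterDifferentiableOn 𝕜 k f s
  | 0, _, _ => trivial
  | _ + 1, _, ⟨hf, hf'⟩ => ⟨hf, hf'.of_succ⟩

theorem mono {k l : ℕ} {f : 𝕜 → F} (hf : IterDifferentiableOn 𝕜 l f s) (hkl : k ≤ l) :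
    IterDifferentiableOn 𝕜 k f s := by
  induction hkl with
  | refl => exact hf
  | step _ ih => exact ih hf.of_succ

theorem const : ∀ (k : ℕ) (c : F), IterDifferentiableOn 𝕜 k (fun _ => c) s
  | 0, _ => trivial
  | k + 1, c => ⟨differentiableOn_const c, by rw [derivWithin_fun_const]; exact const k 0⟩

theorem add : ∀ {k : ℕ} {f g : 𝕜 → F}, IterDifferentiableOn 𝕜 k f s →
    IterDifferentiableOn 𝕜 k g s → IterDifferentiableOn 𝕜 k (fun x => f x + g x) s
  | 0, _, _, _, _ => trivial
  | _ + 1, _, _, ⟨hf, hf'⟩, ⟨hg, hg'⟩ =>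
    ⟨hf.add hg, (hf'.add hg').congr fun x hx =>
      (derivWithin_fun_add (hf x hx) (hg x hx)).symm⟩

theorem mul : ∀ {k : ℕ} {f g : 𝕜 → 𝔸}, IterDifferentiableOn 𝕜 k f s →
    IterDifferentiableOn 𝕜 k g s → IterDifferentiableOn 𝕜 k (fun x => f x * g x) s
  | 0, _, _, _, _ => trivial
  | _ + 1, _, _, hfk@⟨hf, hf'⟩, hgk@⟨hg, hg'⟩ =>
    ⟨hf.mul hg, ((hf'.mul hgk.of_succ).add (hfk.of_succ.mul hg')).congr fun x hx =>
      (derivWithin_fun_mul (hf x hx) (hg x hx)).symm⟩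

theorem of_differentiableOn_iteratedDerivWithin : ∀ {k : ℕ} {f : 𝕜 → F},
    (∀ p < k, DifferentiableOn 𝕜 (iteratedDerivWithin p f s) s) →
      IterDifferentiableOn 𝕜 k f s
  | 0, _, _ => trivial
  | k + 1, f, h =>
    ⟨by simpa only [iteratedDerivWithin_zero] using h 0 k.succ_pos,
      of_differentiableOn_iteratedDerivWithin fun p hp => by
        simpa only [iteratedDerivWithin_succ'] using h (p + 1) (Nat.succ_lt_succ hp)⟩

end IterDifferentiableOn

end

theorem iterDifferentiableOn_Tseq {H : ℝ → Matrix n n ℂ} {s : Set ℝ} {P : ℕ}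
    (hH : IterDifferentiableOn ℝ P H s) :
    ∀ {k m : ℕ}, k + m ≤ P + 1 → IterDifferentiableOn ℝ m (Tseq H s k) s
  | 0, m, _ => IterDifferentiableOn.const m 1
  | k + 1, m, hkm =>
    have hT : IterDifferentiableOn ℝ (m + 1) (Tseq H s k) s :=
      iterDifferentiableOn_Tseq hH (by omega)
    (hT.of_succ.mul (hH.mono (by omega))).add hT.2

/-- If `f' = H f`, then `(T_ℓ f)' = T_ℓ' f + T_ℓ H f = T_{ℓ+1} f`. -/
theorem eqOn_iteratedDerivWithin_Tseq_mul {H f : ℝ → Matrix n n ℂ} {s : Set ℝ} {P : ℕ}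
    (hs : UniqueDiffOn ℝ s) (hH : IterDifferentiableOn ℝ P H s)
    (hf : ∀ x ∈ s, HasDerivWithinAt f (H x * f x) s x) :
    ∀ ℓ ≤ P + 1, Set.EqOn (iteratedDerivWithin ℓ f s) (fun x => Tseq H s ℓ x * f x) s
  | 0, _, x, _ => by simp [Tseq]
  | ℓ + 1, hℓ, x, hx => by
    have hT : DifferentiableOn ℝ (Tseq H s ℓ) s :=
      (iterDifferentiableOn_Tseq hH (by omega : ℓ + 1 ≤ P + 1)).differentiableOn
    rw [iteratedDerivWithin_succ,
      derivWithin_congr (eqOn_iteratedDerivWithin_Tseq_mul hs hH hf ℓ (by omega))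
        (eqOn_iteratedDerivWithin_Tseq_mul hs hH hf ℓ (by omega) hx),
      derivWithin_fun_mul (hT x hx) (hf x hx).differentiableWithinAt,
      (hf x hx).derivWithin (hs x hx)]
    simp only [Tseq, add_mul, mul_assoc, add_comm]

theorem stmt2_general {n : Type*} [Fintype n] [DecidableEq n]
    (H : ℝ → Matrix n n ℂ)
    (U : ℝ → ℝ → Matrix n n ℂ) (hU : IsOrderedExp H U)
    (P : ℕ) (μ Δt : ℝ) (hΔt : 0 < Δt)
    (hdiff : ∀ p < P, DifferentiableOn ℝ
      (iteratedDerivWithin p H (Set.Icc μ (μ + Δt))) (Set.Icc μ (μ + Δt))) :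
    ∀ ℓ ≤ P + 1,
      (ℓ ≤ P → DifferentiableOn ℝ
        (iteratedDerivWithin ℓ (fun s => U s μ) (Set.Icc μ (μ + Δt)))
        (Set.Icc μ (μ + Δt))) ∧
      ∀ s ∈ Set.Icc μ (μ + Δt),
        iteratedDerivWithin ℓ (fun x => U x μ) (Set.Icc μ (μ + Δt)) s
          = Tseq H (Set.Icc μ (μ + Δt)) ℓ s * U s μ := by
  set t := Set.Icc μ (μ + Δt)
  have hH : IterDifferentiableOn ℝ P H t :=
    .of_differentiableOn_iteratedDerivWithin hdiff
  have hUdiff : ∀ x ∈ t, HasDerivWithinAt (fun y => U y μ) (H x * U x μ) t x :=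
    fun x _ => (hU.2 x μ).hasDerivWithinAt
  have key := eqOn_iteratedDerivWithin_Tseq_mul (uniqueDiffOn_Icc (by linarith)) hH hUdiff
  intro ℓ hℓ
  refine ⟨fun hℓP => ?_, key ℓ hℓ⟩
  have hT : DifferentiableOn ℝ (Tseq H t ℓ) t :=
    (iterDifferentiableOn_Tseq hH (by omega : ℓ + 1 ≤ P + 1)).differentiableOn
  exact (hT.mul fun x hx => (hUdiff x hx).differentiableWithinAt).congr (key ℓ hℓ)

/-- for `0 ≤ ℓ ≤ P+1` the `ℓ`-th derivative of `s ↦ U(s,μ)` exists on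
`[μ, μ+Δt]` and equals `T_ℓ(s) U(s,μ)`. -/
theorem stmt2 {n : Type*} [Fintype n] [DecidableEq n]
    (H : ℝ → Matrix n n ℂ) (hHcont : Continuous H)
    (U : ℝ → ℝ → Matrix n n ℂ) (hU : IsOrderedExp H U)
    (P : ℕ) (μ Δt : ℝ) (hΔt : 0 < Δt)
    (hdiff : ∀ p < P, DifferentiableOn ℝ
      (iteratedDerivWithin p H (Set.Icc μ (μ + Δt))) (Set.Icc μ (μ + Δt))) :
    ∀ ℓ ≤ P + 1,
      (ℓ ≤ P → DifferentiableOn ℝ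
        (iteratedDerivWithin ℓ (fun s => U s μ) (Set.Icc μ (μ + Δt)))
        (Set.Icc μ (μ + Δt))) ∧
      ∀ s ∈ Set.Icc μ (μ + Δt),
        iteratedDerivWithin ℓ (fun x => U x μ) (Set.Icc μ (μ + Δt)) s
          = Tseq H (Set.Icc μ (μ + Δt)) ℓ s * U s μ :=
  stmt2_general H U hU P μ Δt hΔt hdiff

end
end

section
/- Let H : ℝ → Matrix n n ℂ be continuous, let U be the ordered exponential generated by H, and let q be a positive even integer. Suppose V(x,y) is defined for x,y in a neighborhood of μ, satisfies the symmetry V(y,x) = V(x,y)^{-1}, and there is a continuous map Ẽ : ℝ → Matrix n n ℂ such that V(ν+t, ν) = U(ν+t, ν) + Ẽ(ν) t^{q} + O(|t|^{q+1}) as t → 0, uniformly for ν near μ. Then Ẽ(μ) = 0. -/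
open scoped Matrix.Norms.L2Operator Topology

noncomputable section

variable {n : Type*} [Fintype n] [DecidableEq n]

/-!
Put `A t = V(μ+t, μ)`, `B t = V(μ, μ+t)`, `X t = U(μ+t, μ)`, `Y t = U(μ, μ+t)`. The expansion
at `ν = μ` gives `A = X + t^q Ẽ(μ) + o(t^q)`, and at `ν = μ + t` with step `-t` (this is where
`q` even enters) it gives `B = Y + t^q Ẽ(μ) + o(t^q)`. Since `X Y = 1` (uniqueness for the
linear ODE) and `B A = 1`, we have `0 = X B A - X = X (B - Y) A + (A - X)`; dividing by `t^q`
and letting `t → 0` yields `2 Ẽ(μ) = 0`.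
-/

open Filter Set

theorem IsOrderedExp.mul_eq {H : ℝ → Matrix n n ℂ} {U : ℝ → ℝ → Matrix n n ℂ}
    (hU : IsOrderedExp H U) (hH : Continuous H) (x y z : ℝ) :
    U x y * U y z = U x z := by
  obtain ⟨C, hC⟩ :=
    (isCompact_Icc (a := min x y - 1) (b := max x y + 1)).exists_bound_of_continuousOn
      hH.continuousOn
  have hlip : ∀ t ∈ Ioo (min x y - 1) (max x y + 1),
      LipschitzOnWith C.toNNReal (H t * ·) univ := by
    intro t ht
    refine (LipschitzWith.of_dist_le_mul fun u w => ?_).lipschitzOnWith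
    rw [dist_eq_norm, dist_eq_norm, ← mul_sub]
    exact (norm_mul_le _ _).trans <| mul_le_mul_of_nonneg_right
      ((hC t (Ioo_subset_Icc_self ht)).trans (Real.le_coe_toNNReal C)) (norm_nonneg _)
  have hx : x ∈ Ioo (min x y - 1) (max x y + 1) :=
    ⟨by linarith [min_le_left x y], by linarith [le_max_left x y]⟩
  have hy : y ∈ Ioo (min x y - 1) (max x y + 1) :=
    ⟨by linarith [min_le_right x y], by linarith [le_max_right x y]⟩
  exact ODE_solution_unique_of_mem_Ioo hlip hy
    (fun t _ => ⟨by simpa only [mul_assoc] using (hU.2 t y).mul_const (U y z), trivial⟩)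
    (fun t _ => ⟨hU.2 t z, trivial⟩) (by rw [hU.1, one_mul]) hx

theorem IsOrderedExp.tendsto_add_self_nhds_one {H : ℝ → Matrix n n ℂ}
    {U : ℝ → ℝ → Matrix n n ℂ} (hU : IsOrderedExp H U) (μ : ℝ) :
    Tendsto (fun t => U (μ + t) μ) (𝓝 0) (𝓝 1) := by
  have := (hU.2 μ μ).continuousAt.comp_of_eq (continuous_const_add μ).continuousAt (add_zero μ)
  simpa [Function.comp_def, hU.1] using this.tendsto

theorem eq_neg_of_tendsto_smul_sub_of_mul_eq_one {α R S : Type*} [Ring R] [TopologicalSpace R]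
    [IsTopologicalRing R] [T2Space R] [Monoid S] [DistribMulAction S R] [IsScalarTower S R R]
    [SMulCommClass S R R] {l : Filter α} [l.NeBot] {X Y A B : α → R} {d : α → S} {e₁ e₂ : R}
    (hX : Tendsto X l (𝓝 1)) (hA : Tendsto A l (𝓝 1))
    (hXY : ∀ᶠ t in l, X t * Y t = 1) (hBA : ∀ᶠ t in l, B t * A t = 1)
    (h₁ : Tendsto (fun t => d t • (A t - X t)) l (𝓝 e₁))
    (h₂ : Tendsto (fun t => d t • (B t - Y t)) l (𝓝 e₂)) :
    e₂ = -e₁ := by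
  have hlim : Tendsto (fun t => X t * (d t • (B t - Y t)) * A t + d t • (A t - X t)) l
      (𝓝 (1 * e₂ * 1 + e₁)) :=
    ((hX.mul h₂).mul hA).add h₁
  have hzero : ∀ᶠ t in l, X t * (d t • (B t - Y t)) * A t + d t • (A t - X t) = 0 := by
    filter_upwards [hXY, hBA] with t hXYt hBAt
    rw [mul_smul_comm, smul_mul_assoc, ← smul_add, mul_sub, sub_mul, mul_assoc, hBAt, hXYt,
      mul_one, one_mul, sub_add_sub_cancel', sub_self, smul_zero]
  rw [one_mul, mul_one] at hlim
  exact eq_neg_of_add_eq_zero_left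
    (tendsto_nhds_unique hlim (tendsto_const_nhds.congr' (hzero.mono fun _ h => h.symm)))

section Remainder

variable {E : Type*} [NormedAddCommGroup E] [NormedSpace ℝ E]

theorem tendsto_inv_pow_smul_of_norm_sub_pow_smul_le {F e : ℝ → E} {e₀ : E} {q : ℕ} {K : ℝ}
    (he : Tendsto e (𝓝[≠] 0) (𝓝 e₀))
    (hF : ∀ᶠ t in 𝓝 0, ‖F t - t ^ q • e t‖ ≤ K * |t| ^ (q + 1)) :
    Tendsto (fun t : ℝ => (t ^ q)⁻¹ • F t) (𝓝[≠] 0) (𝓝 e₀) := by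
  have hrem : Tendsto (fun t : ℝ => (t ^ q)⁻¹ • (F t - t ^ q • e t)) (𝓝[≠] 0) (𝓝 0) := by
    refine squeeze_zero_norm' ?_ (tendsto_nhdsWithin_of_tendsto_nhds
      (by simpa using (continuous_abs.tendsto (0 : ℝ)).const_mul K))
    filter_upwards [nhdsWithin_le_nhds hF, self_mem_nhdsWithin] with t hFt ht
    have htq : 0 < |t| ^ q := pow_pos (abs_pos.mpr ht) q
    calc ‖(t ^ q)⁻¹ • (F t - t ^ q • e t)‖ = (|t| ^ q)⁻¹ * ‖F t - t ^ q • e t‖ := by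
          rw [norm_smul, norm_inv, norm_pow, Real.norm_eq_abs]
      _ ≤ (|t| ^ q)⁻¹ * (K * |t| ^ (q + 1)) := by gcongr
      _ = K * |t| := by field_simp; ring
  refine Tendsto.congr' ?_ (by simpa using he.add hrem)
  filter_upwards [self_mem_nhdsWithin] with t ht
  rw [smul_sub, inv_smul_smul₀ (pow_ne_zero q ht), add_sub_cancel]

theorem tendsto_zero_of_tendsto_inv_pow_smul {F : ℝ → E} {e₀ : E} {q : ℕ} (hq : 0 < q)
    (hF : Tendsto (fun t : ℝ => (t ^ q)⁻¹ • F t) (𝓝[≠] 0) (𝓝 e₀)) :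
    Tendsto F (𝓝[≠] 0) (𝓝 0) := by
  have hpow : Tendsto (fun t : ℝ => t ^ q) (𝓝[≠] 0) (𝓝 0) :=
    tendsto_nhdsWithin_of_tendsto_nhds (by simpa [hq.ne'] using (continuous_pow q).tendsto (0 : ℝ))
  refine Tendsto.congr' ?_ (by simpa using hpow.smul hF)
  filter_upwards [self_mem_nhdsWithin] with t ht
  rw [smul_inv_smul₀ (pow_ne_zero q ht)]

end Remainder

/-- a symmetric approximation `V(ν+t,ν) = U(ν+t,ν) + Ẽ(ν) t^q + O(|t|^{q+1})`
with `q` even forces `Ẽ(μ) = 0`. -/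
theorem stmt5 {n : Type*} [Fintype n] [DecidableEq n]
    (H : ℝ → Matrix n n ℂ) (hHcont : Continuous H)
    (U : ℝ → ℝ → Matrix n n ℂ) (hU : IsOrderedExp H U)
    (q : ℕ) (hq : 0 < q) (hqeven : Even q) (μ : ℝ)
    (V : ℝ → ℝ → Matrix n n ℂ)
    (Et : ℝ → Matrix n n ℂ) (hEtcont : Continuous Et)
    (hsym : ∃ δ > (0 : ℝ), ∀ x y : ℝ, |x - μ| ≤ δ → |y - μ| ≤ δ → V y x = (V x y)⁻¹)
    (hexp : ∃ K > (0 : ℝ), ∃ δ > (0 : ℝ), ∀ ν : ℝ, |ν - μ| ≤ δ → ∀ t : ℝ, |t| ≤ δ →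
      ‖V (ν + t) ν - U (ν + t) ν - t ^ q • Et ν‖ ≤ K * |t| ^ (q + 1)) :
    Et μ = 0 := by
  obtain ⟨δ₁, hδ₁, hsym⟩ := hsym
  obtain ⟨K, -, δ₂, hδ₂, hexp⟩ := hexp
  have hsmall : ∀ δ > (0 : ℝ), ∀ᶠ t in 𝓝 (0 : ℝ), |t| ≤ δ := fun δ hδ => by
    filter_upwards [Metric.closedBall_mem_nhds 0 hδ] with t ht
    simpa using ht
  have hX := tendsto_nhdsWithin_of_tendsto_nhds (s := {0}ᶜ) (hU.tendsto_add_self_nhds_one μ)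
  have hA₁ : Tendsto (fun t : ℝ => (t ^ q)⁻¹ • (V (μ + t) μ - U (μ + t) μ)) (𝓝[≠] 0)
      (𝓝 (Et μ)) := by
    refine tendsto_inv_pow_smul_of_norm_sub_pow_smul_le (K := K) tendsto_const_nhds ?_
    filter_upwards [hsmall δ₂ hδ₂] with t ht
    simpa [sub_sub] using hexp μ (by simpa using hδ₂.le) t ht
  have hB₁ : Tendsto (fun t : ℝ => (t ^ q)⁻¹ • (V μ (μ + t) - U μ (μ + t))) (𝓝[≠] 0)
      (𝓝 (Et μ)) := by
    have hEt : Tendsto (fun t => Et (μ + t)) (𝓝 0) (𝓝 (Et μ)) := by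
      simpa [Function.comp_def] using (hEtcont.comp (continuous_const_add μ)).tendsto 0
    refine tendsto_inv_pow_smul_of_norm_sub_pow_smul_le (K := K)
      (tendsto_nhdsWithin_of_tendsto_nhds hEt) ?_
    filter_upwards [hsmall δ₂ hδ₂] with t ht
    simpa [sub_sub, hqeven.neg_pow] using hexp (μ + t) (by simpa using ht) (-t) (by simpa using ht)
  have hA : Tendsto (fun t => V (μ + t) μ) (𝓝[≠] 0) (𝓝 1) := by
    simpa using hX.add (tendsto_zero_of_tendsto_inv_pow_smul hq hA₁)
  have hXY : ∀ᶠ t in 𝓝[≠] (0 : ℝ), U (μ + t) μ * U μ (μ + t) = 1 :=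
    .of_forall fun t => by rw [hU.mul_eq hHcont, hU.1]
  have hBA : ∀ᶠ t in 𝓝[≠] (0 : ℝ), V μ (μ + t) * V (μ + t) μ = 1 := by
    filter_upwards [hA.eventually (Units.isOpen.mem_nhds isUnit_one),
      nhdsWithin_le_nhds (hsmall δ₁ hδ₁)] with t hunit ht
    rw [hsym (μ + t) μ (by simpa using ht) (by simpa using hδ₁.le)]
    exact Matrix.nonsing_inv_mul _ ((Matrix.isUnit_iff_isUnit_det _).mp hunit)
  have h := eq_neg_of_tendsto_smul_sub_of_mul_eq_one hX hA hXY hBA hA₁ hB₁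
  exact (self_eq_neg (G := n → n → ℂ)).mp h
end
end

section
/- Let H : ℝ → Matrix n n ℂ be twice continuously differentiable on a neighborhood of μ, and let U be the ordered exponential generated by H. Then ‖U(μ+t, μ) − exp(t · H(μ + t/2))‖ = O(t^{3}) as t → 0⁺, where exp denotes the matrix exponential. -/
open scoped Matrix.Norms.L2Operator Topology

noncomputable section

variable {n : Type*} [Fintype n] [DecidableEq n]

/-!
Put `A = H(μ + t/2)`. Variation of constants gives
`U(μ+t, μ) - exp(tA) = ∫₀ᵗ exp((t-s)A) (H(μ+s) - A) U(μ+s, μ) ds`.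
Replacing `exp((t-s)A)` and `U(μ+s, μ)` by `1` costs `O(t²)` pointwise, since both differ from `1`
by `O(t)` and `H(μ+s) - A = O(t)`. What remains, `∫₀ᵗ (H(μ+s) - A) ds`, is the error of the
midpoint rule: the linear Taylor term `(s - t/2) H'(μ)` integrates to zero and the remainder is
`O(t²)` pointwise because `H'` is Lipschitz near `μ`.
-/

open Set MeasureTheory intervalIntegral NormedSpace
open scoped NNReal

section VectorValued

variable {E : Type*} [NormedAddCommGroup E] [NormedSpace ℝ E]

theorem norm_sub_sub_smul_le_of_lipschitzOnWith {f f' : ℝ → E} {a b : ℝ} {K : ℝ≥0}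
    (hab : a ≤ b) (hf : ∀ x ∈ Icc a b, HasDerivWithinAt f (f' x) (Icc a b) x)
    (hf' : LipschitzOnWith K f' (Icc a b)) :
    ‖f b - f a - (b - a) • f' a‖ ≤ K * (b - a) ^ 2 := by
  have hg : ∀ x ∈ Icc a b,
      HasDerivWithinAt (fun x => f x - (x - a) • f' a) (f' x - f' a) (Icc a b) x := fun x hx =>
    ((hf x hx).sub (((hasDerivWithinAt_id x _).sub_const a).smul_const (f' a))).congr_deriv
      (by rw [one_smul])
  have hg' : ∀ x ∈ Ico a b, ‖f' x - f' a‖ ≤ K * (b - a) := fun x hx => by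
    rw [← dist_eq_norm]
    refine (hf'.dist_le_mul x (Ico_subset_Icc_self hx) a (left_mem_Icc.2 hab)).trans ?_
    rw [Real.dist_eq, abs_of_nonneg (sub_nonneg.2 hx.1)]
    gcongr
    exact hx.2.le
  have := norm_image_sub_le_of_norm_deriv_le_segment' hg hg' b (right_mem_Icc.2 hab)
  rwa [sub_self, zero_smul, sub_zero, sub_right_comm, mul_assoc, ← sq] at this

theorem integral_sub_midpoint_smul_eq_zero [CompleteSpace E] (a b : ℝ) (B : E) :
    ∫ x in a..b, (x - (a + b) / 2) • B = 0 := by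
  rw [intervalIntegral.integral_smul_const,
    integral_sub intervalIntegrable_id intervalIntegrable_const, integral_id,
    intervalIntegral.integral_const, smul_eq_mul]
  ring_nf
  exact zero_smul ℝ B

end VectorValued

theorem norm_mul_mul_sub_le {𝔸 : Type*} [NormedRing 𝔸] (E D W R : 𝔸) :
    ‖E * (D * W) - R‖ ≤ ‖E‖ * ‖D‖ * ‖W - 1‖ + ‖E - 1‖ * ‖D‖ + ‖D - R‖ := by
  have : E * (D * W) - R = E * (D * (W - 1)) + (E - 1) * D + (D - R) := by noncomm_ring
  rw [this]
  refine (norm_add₃_le).trans (add_le_add_three ?_ (norm_mul_le _ _) le_rfl)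
  exact (norm_mul_le _ _).trans (by rw [mul_assoc]; gcongr; exact norm_mul_le _ _)

section BanachAlgebra

variable {𝔸 : Type*} [NormedRing 𝔸] [NormedAlgebra ℝ 𝔸] [CompleteSpace 𝔸]

theorem norm_exp_smul_sub_one_le {A : 𝔸} {T M : ℝ} (hT : 0 ≤ T)
    (hM : ∀ u ∈ Icc 0 T, ‖exp (u • A)‖ ≤ M) : ‖exp (T • A) - 1‖ ≤ M * ‖A‖ * T := by
  have hderiv : ∀ u ∈ Icc 0 T, HasDerivWithinAt (fun u : ℝ => exp (u • A)) (exp (u • A) * A)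
      (Icc 0 T) u := fun u _ => (hasDerivAt_exp_smul_const A u).hasDerivWithinAt
  have hbound : ∀ u ∈ Ico 0 T, ‖exp (u • A) * A‖ ≤ M * ‖A‖ := fun u hu =>
    (norm_mul_le _ _).trans (by gcongr; exact hM u (Ico_subset_Icc_self hu))
  simpa using norm_image_sub_le_of_norm_deriv_le_segment' hderiv hbound T (right_mem_Icc.2 hT)

theorem hasDerivAt_exp_smul_mul {F V : ℝ → 𝔸} {A : 𝔸} {b x : ℝ}
    (hV : HasDerivAt V (F x * V x) x) :
    HasDerivAt (fun x => exp ((b - x) • A) * V x) (exp ((b - x) • A) * ((F x - A) * V x)) x := by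
  have hE : HasDerivAt (fun x => exp ((b - x) • A)) (-(exp ((b - x) • A) * A)) x :=
    ((hasDerivAt_exp_smul_const A (b - x)).scomp x ((hasDerivAt_id x).const_sub b)).congr_deriv
      (neg_one_smul ℝ _)
  refine (hE.mul hV).congr_deriv ?_
  simp only [mul_sub, sub_mul, neg_mul, mul_assoc]
  abel

theorem continuousOn_exp_smul_mul {F V : ℝ → 𝔸} {A : 𝔸} {b : ℝ} {s : Set ℝ}
    (hV : ∀ x ∈ s, HasDerivAt V (F x * V x) x) (hF : ContinuousOn F s) :
    ContinuousOn (fun x => exp ((b - x) • A) * ((F x - A) * V x)) s := by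
  have hE : Continuous fun x : ℝ => exp ((b - x) • A) := continuous_iff_continuousAt.2 fun x =>
    ((hasDerivAt_exp_smul_const A (b - x)).scomp x ((hasDerivAt_id x).const_sub b)).continuousAt
  exact hE.continuousOn.mul
    ((hF.sub continuousOn_const).mul fun x hx => (hV x hx).continuousAt.continuousWithinAt)

theorem sub_exp_smul_mul_eq_integral {F V : ℝ → 𝔸} {A : 𝔸} {a b : ℝ}
    (hV : ∀ x ∈ uIcc a b, HasDerivAt V (F x * V x) x) (hF : ContinuousOn F (uIcc a b)) :
    V b - exp ((b - a) • A) * V a = ∫ x in a..b, exp ((b - x) • A) * ((F x - A) * V x) := by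
  rw [integral_eq_sub_of_hasDerivAt (fun x hx => hasDerivAt_exp_smul_mul (hV x hx))
    (continuousOn_exp_smul_mul hV hF).intervalIntegrable]
  simp

theorem norm_sub_exp_smul_midpoint_le {h V : ℝ → 𝔸} {B : 𝔸} {a t Mh MV ME : ℝ} {K L : ℝ≥0}
    (ht : 0 ≤ t) (hV : ∀ x ∈ Icc a (a + t), HasDerivAt V (h x * V x) x) (hV₀ : V a = 1)
    (hlip : LipschitzOnWith K h (Icc a (a + t)))
    (htaylor : ∀ x ∈ Icc a (a + t), ‖h x - h a - (x - a) • B‖ ≤ L * (x - a) ^ 2)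
    (hMh : ∀ x ∈ Icc a (a + t), ‖h x‖ ≤ Mh) (hMV : ∀ x ∈ Icc a (a + t), ‖V x‖ ≤ MV)
    (hME : ∀ u ∈ Icc 0 t, ‖exp (u • h (a + t / 2))‖ ≤ ME) :
    ‖V (a + t) - exp (t • h (a + t / 2))‖ ≤
      (ME * K * Mh * MV + ME * Mh * K + 2 * L) * t ^ 3 := by
  set m := a + t / 2 with hm_def
  set A := h m
  set C := ME * K * Mh * MV + ME * Mh * K + 2 * L
  have hI : uIcc a (a + t) = Icc a (a + t) := uIcc_of_le (by linarith)
  have hm : m ∈ Icc a (a + t) := ⟨by linarith, by linarith⟩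
  have hME₀ : 0 ≤ ME := (norm_nonneg _).trans (hME 0 (left_mem_Icc.2 ht))
  have hMh₀ : 0 ≤ Mh := (norm_nonneg _).trans (hMh m hm)
  have hMV₀ : 0 ≤ MV := (norm_nonneg _).trans (hMV m hm)
  have hB : IntervalIntegrable (fun x => (x - m) • B) volume a (a + t) :=
    (continuous_id.sub continuous_const).smul continuous_const |>.intervalIntegrable _ _
  -- the midpoint rule is exact on the linear part of `h`
  have herr : V (a + t) - exp (t • A) =
      ∫ x in a..a + t, (exp ((a + t - x) • A) * ((h x - A) * V x) - (x - m) • B) := by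
    have hV' : ∀ x ∈ uIcc a (a + t), HasDerivAt V (h x * V x) x := hI ▸ hV
    have hh : ContinuousOn h (uIcc a (a + t)) := hI ▸ hlip.continuousOn
    have hmid := integral_sub_midpoint_smul_eq_zero a (a + t) B
    rw [show (a + (a + t)) / 2 = m by ring] at hmid
    rw [integral_sub (continuousOn_exp_smul_mul hV' hh).intervalIntegrable hB, hmid, sub_zero,
      ← sub_exp_smul_mul_eq_integral hV' hh, hV₀, mul_one, add_sub_cancel_left]
  have hVsub : ∀ x ∈ Icc a (a + t), ‖V x - 1‖ ≤ Mh * MV * (x - a) := by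
    rw [← hV₀]
    refine norm_image_sub_le_of_norm_deriv_le_segment' (fun x hx => (hV x hx).hasDerivWithinAt)
      fun x hx => ?_
    have hx' := Ico_subset_Icc_self hx
    exact (norm_mul_le _ _).trans (mul_le_mul (hMh x hx') (hMV x hx') (norm_nonneg _) hMh₀)
  have hpt : ∀ x ∈ uIoc a (a + t),
      ‖exp ((a + t - x) • A) * ((h x - A) * V x) - (x - m) • B‖ ≤ C * t ^ 2 := by
    intro x hx
    rw [uIoc_of_le (by linarith)] at hx
    have hxI : x ∈ Icc a (a + t) := Ioc_subset_Icc_self hx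
    have hu : a + t - x ∈ Icc 0 t := ⟨by linarith [hx.2], by linarith [hx.1]⟩
    have hE1 : ‖exp ((a + t - x) • A) - 1‖ ≤ ME * Mh * t :=
      (norm_exp_smul_sub_one_le hu.1 fun u hu' => hME u ⟨hu'.1, hu'.2.trans hu.2⟩).trans
        (by gcongr; exacts [hu.1, hMh m hm, hu.2])
    have hD : ‖h x - A‖ ≤ K * t := by
      rw [← dist_eq_norm]
      refine (hlip.dist_le_mul x hxI m hm).trans ?_
      gcongr
      rw [Real.dist_eq, abs_le]
      constructor <;> linarith [hx.1, hx.2]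
    have hR : ‖h x - A - (x - m) • B‖ ≤ 2 * L * t ^ 2 := by
      have hsplit : h x - A - (x - m) • B =
          (h x - h a - (x - a) • B) - (A - h a - (m - a) • B) := by
        rw [show x - m = (x - a) - (m - a) by ring, sub_smul]
        abel
      rw [hsplit]
      refine (norm_sub_le _ _).trans ?_
      have h1 := htaylor x hxI
      have h2 := htaylor m hm
      have hxa : (x - a) ^ 2 ≤ t ^ 2 := pow_le_pow_left₀ (by linarith [hx.1]) (by linarith [hx.2]) 2
      have hma : (m - a) ^ 2 ≤ t ^ 2 := pow_le_pow_left₀ (by linarith) (by linarith) 2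
      nlinarith [L.2]
    calc _ ≤ ‖exp ((a + t - x) • A)‖ * ‖h x - A‖ * ‖V x - 1‖ + ‖exp ((a + t - x) • A) - 1‖ *
          ‖h x - A‖ + ‖h x - A - (x - m) • B‖ := norm_mul_mul_sub_le _ _ _ _
      _ ≤ ME * (K * t) * (Mh * MV * t) + ME * Mh * t * (K * t) + 2 * L * t ^ 2 := by
          gcongr
          · exact hME _ hu
          · exact (hVsub x hxI).trans (by gcongr; linarith [hx.2])
      _ = C * t ^ 2 := by ring
  calc ‖V (a + t) - exp (t • A)‖ ≤ C * t ^ 2 * |a + t - a| := by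
        rw [herr]; exact norm_integral_le_of_norm_le_const hpt
    _ = C * t ^ 3 := by rw [add_sub_cancel_left, abs_of_nonneg ht]; ring

theorem exists_norm_sub_exp_smul_midpoint_le {h h' V : ℝ → 𝔸} {a ε : ℝ} {K L : ℝ≥0}
    (hh : ∀ x ∈ Icc a (a + ε), HasDerivWithinAt h (h' x) (Icc a (a + ε)) x)
    (hlip : LipschitzOnWith K h (Icc a (a + ε))) (hlip' : LipschitzOnWith L h' (Icc a (a + ε)))
    (hV : ∀ x ∈ Icc a (a + ε), HasDerivAt V (h x * V x) x) (hV₀ : V a = 1) :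
    ∃ C, ∀ t ∈ Icc 0 ε, ‖V (a + t) - exp (t • h (a + t / 2))‖ ≤ C * t ^ 3 := by
  have hexp : Continuous (exp : 𝔸 → 𝔸) :=
    continuous_iff_continuousAt.2 fun x => (exp_analytic (𝕂 := ℝ) x).continuousAt
  obtain ⟨Mh, hMh⟩ := isCompact_Icc.exists_bound_of_continuousOn hlip.continuousOn
  obtain ⟨MV, hMV⟩ := isCompact_Icc.exists_bound_of_continuousOn
    fun x hx => (hV x hx).continuousAt.continuousWithinAt
  obtain ⟨ME, hME⟩ :=
    ((isCompact_Icc (a := 0) (b := ε)).prod isCompact_Icc).exists_bound_of_continuousOn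
      (f := fun p : ℝ × ℝ => exp (p.1 • h p.2)) (hexp.comp_continuousOn (continuousOn_fst.smul
        (hlip.continuousOn.comp continuousOn_snd fun p hp => (mem_prod.1 hp).2)))
  refine ⟨ME * K * Mh * MV + ME * Mh * K + 2 * L, fun t ht => ?_⟩
  have hsub : Icc a (a + t) ⊆ Icc a (a + ε) := Icc_subset_Icc_right (by linarith [ht.2])
  refine norm_sub_exp_smul_midpoint_le (B := h' a) ht.1 (fun x hx => hV x (hsub hx)) hV₀
    (hlip.mono hsub) (fun x hx => ?_) (fun x hx => hMh x (hsub hx))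
    (fun x hx => hMV x (hsub hx)) fun u hu => hME (u, a + t / 2) ⟨?_, hsub ⟨?_, ?_⟩⟩
  · have hsub' : Icc a x ⊆ Icc a (a + ε) := hsub.trans' (Icc_subset_Icc_right hx.2)
    exact norm_sub_sub_smul_le_of_lipschitzOnWith hx.1
      (fun y hy => (hh y (hsub' hy)).mono hsub') (hlip'.mono hsub')
  · exact ⟨hu.1, hu.2.trans ht.2⟩
  · linarith [ht.1]
  · linarith [ht.1]

end BanachAlgebra

theorem stmt7_general {n : Type*} [Fintype n] [DecidableEq n]
    (H : ℝ → Matrix n n ℂ)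
    (U : ℝ → ℝ → Matrix n n ℂ) (hU : IsOrderedExp H U)
    (μ : ℝ) (hH : ∃ δ > (0 : ℝ), ContDiffOn ℝ 2 H (Metric.ball μ δ)) :
    Asymptotics.IsBigO (𝓝[>] (0 : ℝ))
      (fun t => ‖U (μ + t) μ - NormedSpace.exp (t • H (μ + t / 2))‖)
      (fun t => t ^ 3) := by
  obtain ⟨δ, hδ, hH⟩ := hH
  have hball : Metric.ball μ δ ∈ 𝓝 μ := Metric.ball_mem_nhds μ hδ
  obtain ⟨K, s, hs, hK⟩ := ((hH.contDiffAt hball).of_le one_le_two).exists_lipschitzOnWith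
  obtain ⟨L, s', hs', hL⟩ :=
    ((hH.deriv_of_isOpen Metric.isOpen_ball le_rfl).contDiffAt hball).exists_lipschitzOnWith
  obtain ⟨b, hμb, hsub⟩ := mem_nhdsGE_iff_exists_Icc_subset.1
    (nhdsWithin_le_nhds (Filter.inter_mem (Filter.inter_mem hs hs') hball))
  rw [← add_sub_cancel μ b] at hsub
  obtain ⟨C, hC⟩ := exists_norm_sub_exp_smul_midpoint_le (V := fun x => U x μ)
    (fun x hx => ((hH.differentiableOn two_ne_zero x (hsub hx).2).differentiableAt
      (Metric.isOpen_ball.mem_nhds (hsub hx).2)).hasDerivAt.hasDerivWithinAt)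
    (hK.mono fun x hx => (hsub hx).1.1) (hL.mono fun x hx => (hsub hx).1.2)
    (fun x _ => hU.2 x μ) (hU.1 μ)
  refine Asymptotics.IsBigO.of_bound C ?_
  filter_upwards [Ioo_mem_nhdsGT (sub_pos.2 hμb)] with t ht
  rw [norm_norm, norm_pow, Real.norm_of_nonneg ht.1.le]
  exact hC t ⟨ht.1.le, ht.2.le⟩

/-- midpoint-exponential approximation of the ordered exponential has
error `O(t³)` as `t → 0⁺` for `H` twice continuously differentiable near `μ`. -/
theorem stmt7 {n : Type*} [Fintype n] [DecidableEq n]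
    (H : ℝ → Matrix n n ℂ) (hHcont : Continuous H)
    (U : ℝ → ℝ → Matrix n n ℂ) (hU : IsOrderedExp H U)
    (μ : ℝ) (hH : ∃ δ > (0 : ℝ), ContDiffOn ℝ 2 H (Metric.ball μ δ)) :
    Asymptotics.IsBigO (𝓝[>] (0 : ℝ))
      (fun t => ‖U (μ + t) μ - NormedSpace.exp (t • H (μ + t / 2))‖)
      (fun t => t ^ 3) :=
  stmt7_general H U hU μ hH

end
end

section
/- Let A_1, …, A_m be fixed matrices in Matrix n n ℂ. Then the symmetrized Trotter product satisfies ‖(∏_{j=1}^m exp(A_j t/2))·(∏_{j=m}^1 exp(A_j t/2)) − exp(t(A_1 + ⋯ + A_m))‖ = O(t^{3}) as t → 0, where the first product is taken in the order j = 1,…,m and the second in the order j = m,…,1. -/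
open scoped Matrix.Norms.L2Operator Topology

noncomputable section

variable {n : Type*} [Fintype n] [DecidableEq n]

/-! Writing `S(A₀, …, A_m)(t)` for the symmetrized product, peeling off the outermost factors gives
`S(A₀, …, A_m)(t) = e^{tA₀/2} S(A₁, …, A_m)(t) e^{tA₀/2}`. By induction on the number of generators
the error is then `O(t³)` plus that of the Strang splitting `e^{tA} e^{tB} e^{tA}` against
`e^{t(2A + B)}`. This difference is analytic in `t` and its value and first two derivatives vanish
at `t = 0`, so it is `O(t³)`. -/

open Asymptotics Filter NormedSpace

theorem AnalyticAt.isBigO_sub_pow_of_iteratedDeriv_eq_zero {𝕜 E : Type*}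
    [NontriviallyNormedField 𝕜] [CharZero 𝕜] [NormedAddCommGroup E] [NormedSpace 𝕜 E]
    [CompleteSpace E] {f : 𝕜 → E} {z₀ : 𝕜} {k : ℕ} (hf : AnalyticAt 𝕜 f z₀)
    (hk : ∀ i < k, iteratedDeriv i f z₀ = 0) :
    f =O[𝓝 z₀] fun z => (z - z₀) ^ k := by
  obtain ⟨g, hg, hfg⟩ := (natCast_le_analyticOrderAt hf).1
    ((natCast_le_analyticOrderAt_iff_iteratedDeriv_eq_zero hf).2 hk)
  have hg_bdd : g =O[𝓝 z₀] fun _ => (1 : 𝕜) := hg.continuousAt.tendsto.isBigO_one 𝕜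
  simpa using
    ((isBigO_refl (fun z => (z - z₀) ^ k) _).smul hg_bdd).congr' (EventuallyEq.symm hfg) .rfl

section

variable {𝕂 𝔸 : Type*} [RCLike 𝕂] [NormedRing 𝔸] [NormedAlgebra 𝕂 𝔸]

def symmTrotter {m : ℕ} (A : Fin m → 𝔸) (t : 𝕂) : 𝔸 :=
  (List.ofFn fun j => exp ((t / 2) • A j)).prod *
    ((List.ofFn fun j => exp ((t / 2) • A j)).reverse).prod

theorem symmTrotter_succ {m : ℕ} (A : Fin (m + 1) → 𝔸) (t : 𝕂) :
    symmTrotter A t =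
      exp ((t / 2) • A 0) * symmTrotter (Fin.tail A) t * exp ((t / 2) • A 0) := by
  simp [symmTrotter, List.ofFn_succ, Fin.tail, mul_assoc]

variable [CompleteSpace 𝔸]

theorem analyticAt_exp_smul_const (X : 𝔸) (t : 𝕂) :
    AnalyticAt 𝕂 (fun s : 𝕂 => exp (s • X)) t :=
  (exp_analytic _).comp (analyticAt_id.smul analyticAt_const)

theorem exp_smul_mul_exp_smul_mul_exp_smul_sub_exp_isBigO (A B : 𝔸) :
    (fun t : 𝕂 => exp (t • A) * exp (t • B) * exp (t • A) - exp (t • (A + B + A)))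
      =O[𝓝 0] fun t => t ^ 3 := by
  set C := A + B + A
  set u := fun t : 𝕂 => exp (t • A)
  set v := fun t : 𝕂 => exp (t • B)
  set w := fun t : 𝕂 => exp (t • C)
  have hu t : HasDerivAt u (A * u t) t := hasDerivAt_exp_smul_const' A t
  have hv t : HasDerivAt v (B * v t) t := hasDerivAt_exp_smul_const' B t
  have hw t : HasDerivAt w (C * w t) t := hasDerivAt_exp_smul_const' C t
  have h0 : u 0 = 1 ∧ v 0 = 1 ∧ w 0 = 1 := by simp [u, v, w]
  set f' := fun t => (A * u t * v t + u t * (B * v t)) * u t + u t * v t * (A * u t) - C * w t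
  have hf t : HasDerivAt (fun s => u s * v s * u s - w s) (f' t) t :=
    (((hu t).mul (hv t)).mul (hu t)).sub (hw t)
  have hf' : HasDerivAt f' _ 0 :=
    (((((hu 0).const_mul A).mul (hv 0)).add ((hu 0).mul ((hv 0).const_mul B))).mul (hu 0)).add
      (((hu 0).mul (hv 0)).mul ((hu 0).const_mul A)) |>.sub ((hw 0).const_mul C)
  have hderiv : deriv (fun s => u s * v s * u s - w s) = f' := funext fun t => (hf t).deriv
  suffices (fun s => u s * v s * u s - w s) =O[𝓝 0] fun t => (t - 0) ^ 3 by simpa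
  refine AnalyticAt.isBigO_sub_pow_of_iteratedDeriv_eq_zero ?_ fun i hi => ?_
  · exact (((analyticAt_exp_smul_const A 0).mul (analyticAt_exp_smul_const B 0)).mul
      (analyticAt_exp_smul_const A 0)).sub (analyticAt_exp_smul_const C 0)
  interval_cases i
  · simp [h0]
  · simp only [iteratedDeriv_one, hderiv, f', h0, mul_one, one_mul, C]
    abel
  · rw [iteratedDeriv_succ, iteratedDeriv_one, hderiv, hf'.deriv]
    simp only [Pi.mul_apply, Pi.add_apply, h0, mul_one, one_mul, C]
    noncomm_ring

theorem exp_half_smul_mul_exp_smul_mul_exp_half_smul_sub_exp_isBigO (A B : 𝔸) :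
    (fun t : 𝕂 => exp ((t / 2) • A) * exp (t • B) * exp ((t / 2) • A) - exp (t • (A + B)))
      =O[𝓝 0] fun t => t ^ 3 := by
  have hA : (2⁻¹ : 𝕂) • A + B + (2⁻¹ : 𝕂) • A = A + B := by module
  simpa [smul_smul, div_eq_mul_inv, hA] using
    exp_smul_mul_exp_smul_mul_exp_smul_sub_exp_isBigO (𝕂 := 𝕂) ((2⁻¹ : 𝕂) • A) B

theorem symmTrotter_sub_exp_isBigO {m : ℕ} (A : Fin m → 𝔸) :
    (fun t : 𝕂 => symmTrotter A t - exp (t • ∑ j, A j)) =O[𝓝 0] fun t => t ^ 3 := by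
  induction m with
  | zero => simpa [symmTrotter] using isBigO_zero _ _
  | succ m ih =>
    set e := fun t : 𝕂 => exp ((t / 2) • A 0)
    have he : e =O[𝓝 0] fun _ => (1 : 𝕂) :=
      ((differentiable_exp_smul_const 𝕂 (A 0)).continuous.comp
        (continuous_id.div_const 2)).tendsto 0 |>.isBigO_one 𝕂
    have hsplit (t : 𝕂) : symmTrotter A t - exp (t • ∑ j, A j) =
        e t * (symmTrotter (Fin.tail A) t - exp (t • ∑ j, Fin.tail A j)) * e t +
          (e t * exp (t • ∑ j, Fin.tail A j) * e t - exp (t • (A 0 + ∑ j, Fin.tail A j))) := by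
      rw [symmTrotter_succ, Fin.sum_univ_succ]
      noncomm_ring
    simp_rw [hsplit]
    refine IsBigO.add ?_ (exp_half_smul_mul_exp_smul_mul_exp_half_smul_sub_exp_isBigO _ _)
    simpa using (he.mul (ih (Fin.tail A))).mul he

end

/-- the symmetrized Trotter product of constant matrices agrees with
`exp(t(A₁ + ⋯ + A_m))` up to `O(t³)` as `t → 0`. -/
theorem stmt8 {n : Type*} [Fintype n] [DecidableEq n]
    {m : ℕ} (A : Fin m → Matrix n n ℂ) :
    Asymptotics.IsBigO (𝓝 (0 : ℝ))
      (fun t : ℝ =>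
        ‖(List.ofFn fun j : Fin m => NormedSpace.exp ((t / 2) • A j)).prod *
            ((List.ofFn fun j : Fin m => NormedSpace.exp ((t / 2) • A j)).reverse).prod -
          NormedSpace.exp (t • ∑ j, A j)‖)
      (fun t => t ^ 3) :=
  (symmTrotter_sub_exp_isBigO (𝕂 := ℝ) A).norm_left
end
end

section
/- Let k ≥ 1 be an integer, Γ ≥ 0, and X_0, …, X_{2k} be nonnegative reals with X_p ≤ Γ^{p+1} for each 0 ≤ p ≤ 2k. Let f(t) = exp(Σ_{p=0}^{2k} (X_p/p!) t^{p+1}), with Taylor series Σ_n a_n t^n at 0 (all a_n ≥ 0). Then for every t ≥ 0 with √2·Γ·t ≤ 1/2, the tail beyond order 2k satisfies Σ_{n=2k+1}^∞ a_n t^n ≤ 2·(√2·Γ·t)^{2k+1}. -/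
open scoped Matrix.Norms.L2Operator Topology

noncomputable section

variable {n : Type*} [Fintype n] [DecidableEq n]

/-!
Write `f = exp ∘ E` with `E` a polynomial, so that `f' = E' f`. With `c = √2 Γ`, the bound
`1 / q! ≤ √2 ^ (q + 1) / (q + 1)` makes the Taylor coefficients `(q + 1) X_q / q!` of `E'` at `0`
at most those of `c / (1 - c t)`, and Leibniz's rule in `f' = E' f` propagates this domination
to `f` against `1 / (1 - c t)`: the `n`-th Taylor coefficient of `f` is at most `c ^ n`. The tail
is then dominated by a geometric series of ratio `c t ≤ 1 / 2`.
-/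

open Polynomial Finset
open scoped ContDiff Nat

namespace Polynomial

variable {𝕜 : Type*} [NontriviallyNormedField 𝕜]

lemma contDiff_eval (P : 𝕜[X]) : ContDiff 𝕜 ∞ fun t => P.eval t := by
  simpa using P.contDiff_aeval (𝕜 := 𝕜) ∞

lemma iteratedDeriv_eval (P : 𝕜[X]) (q : ℕ) :
    iteratedDeriv q (fun t => P.eval t) = fun t => (derivative^[q] P).eval t := by
  induction q with
  | zero => rfl
  | succ q ih =>
    rw [iteratedDeriv_succ, ih, Function.iterate_succ_apply']
    ext t
    exact Polynomial.deriv _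

lemma iteratedDeriv_eval_zero (P : 𝕜[X]) (q : ℕ) :
    iteratedDeriv q (fun t => P.eval t) 0 = q ! * P.coeff q := by
  simp only [P.iteratedDeriv_eval, ← coeff_zero_eq_eval_zero, coeff_iterate_derivative, zero_add,
    Nat.descFactorial_self, nsmul_eq_mul]

end Polynomial

theorem abs_iteratedDeriv_le_of_deriv_eq_mul {f g : ℝ → ℝ} {c x : ℝ}
    (hf : ContDiff ℝ ∞ f) (hg : ContDiff ℝ ∞ g) (hfg : deriv f = g * f) (hfx : |f x| ≤ 1)
    (hgx : ∀ q, |iteratedDeriv q g x| ≤ q ! * c ^ (q + 1)) (n : ℕ) :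
    |iteratedDeriv n f x| ≤ n ! * c ^ n := by
  induction n using Nat.strong_induction_on with
  | _ n ih =>
  rcases n with _ | m
  · simpa using hfx
  have leibniz : iteratedDeriv (m + 1) f x = ∑ q ∈ range (m + 1),
      m.choose q * iteratedDeriv q g x * iteratedDeriv (m - q) f x := by
    rw [iteratedDeriv_succ', hfg]
    exact iteratedDeriv_mul (hg.of_le (by exact_mod_cast le_top)).contDiffAt
      (hf.of_le (by exact_mod_cast le_top)).contDiffAt
  have term_le : ∀ q ∈ range (m + 1),
      |m.choose q * iteratedDeriv q g x * iteratedDeriv (m - q) f x| ≤ m ! * c ^ (m + 1) := by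
    intro q hq
    have hqm : q ≤ m := Nat.lt_succ_iff.mp (mem_range.mp hq)
    calc |m.choose q * iteratedDeriv q g x * iteratedDeriv (m - q) f x|
        = m.choose q * |iteratedDeriv q g x| * |iteratedDeriv (m - q) f x| := by
          rw [abs_mul, abs_mul, Nat.abs_cast]
      _ ≤ m.choose q * (q ! * c ^ (q + 1)) * ((m - q)! * c ^ (m - q)) := by
          have hg_le := hgx q
          have hf_le := ih (m - q) (by omega)
          gcongr
          exact mul_nonneg (Nat.cast_nonneg _) ((abs_nonneg _).trans hg_le)
      _ = (m.choose q * q ! * (m - q)! : ℕ) * (c ^ (q + 1) * c ^ (m - q)) := by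
          push_cast; ring
      _ = m ! * c ^ (m + 1) := by
          rw [Nat.choose_mul_factorial_mul_factorial hqm, ← pow_add]
          congr 2; omega
  calc |iteratedDeriv (m + 1) f x|
      ≤ ∑ q ∈ range (m + 1), |m.choose q * iteratedDeriv q g x * iteratedDeriv (m - q) f x| := by
        rw [leibniz]; exact abs_sum_le_sum_abs _ _
    _ ≤ ∑ _q ∈ range (m + 1), m ! * c ^ (m + 1) := sum_le_sum term_le
    _ = (m + 1)! * c ^ (m + 1) := by
        rw [sum_const, card_range, nsmul_eq_mul, Nat.factorial_succ]; push_cast; ring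

lemma succ_le_factorial_mul_sqrt_two_pow (q : ℕ) : (q + 1 : ℝ) ≤ q ! * √2 ^ (q + 1) := by
  rcases q with _ | q
  · simp [Real.one_lt_sqrt_two.le]
  have h2 : (q + 2 : ℝ) ≤ 2 * (q + 1)! := by
    have : (q + 1 : ℝ) ≤ (q + 1)! := by exact_mod_cast Nat.self_le_factorial (q + 1)
    linarith
  calc ((q + 1 : ℕ) + 1 : ℝ) = q + 2 := by push_cast; ring
    _ ≤ (q + 1)! * 2 := by linarith
    _ ≤ (q + 1)! * (√2 ^ 2 * √2 ^ q) := by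
        gcongr
        rw [Real.sq_sqrt zero_le_two]
        exact le_mul_of_one_le_right zero_le_two (one_le_pow₀ Real.one_lt_sqrt_two.le)
    _ = (q + 1)! * √2 ^ (q + 1 + 1) := by ring

theorem abs_iteratedDeriv_exp_sum_le {N : ℕ} {Γ : ℝ} (hΓ : 0 ≤ Γ) {X : ℕ → ℝ}
    (hX : ∀ p < N, |X p| ≤ Γ ^ (p + 1)) (n : ℕ) :
    |iteratedDeriv n (fun t => Real.exp (∑ p ∈ range N, X p / p ! * t ^ (p + 1))) 0|
      ≤ n ! * (√2 * Γ) ^ n := by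
  set E : ℝ[X] := ∑ p ∈ range N, C (X p / p !) * Polynomial.X ^ (p + 1)
  have hE : (fun t => Real.exp (∑ p ∈ range N, X p / p ! * t ^ (p + 1)))
      = fun t => Real.exp (E.eval t) := by
    simp [E, eval_finsetSum]
  have hE_coeff (q : ℕ) : E.coeff (q + 1) = if q < N then X q / q ! else 0 := by
    simp [E, coeff_X_pow]
  rw [hE]
  refine abs_iteratedDeriv_le_of_deriv_eq_mul (g := fun t => (derivative E).eval t)
    (Real.contDiff_exp.comp E.contDiff_eval) (derivative E).contDiff_eval ?_ ?_ ?_ n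
  · ext t
    exact ((E.hasDerivAt t).exp).deriv.trans (mul_comm _ _)
  · simp [E, eval_finsetSum]
  intro q
  rw [iteratedDeriv_eval_zero, coeff_derivative, hE_coeff]
  split_ifs with hq
  · have hcancel : (q ! : ℝ) * (X q / q ! * (q + 1)) = (q + 1) * X q := by field_simp
    calc |(q ! : ℝ) * (X q / q ! * (q + 1))| = (q + 1) * |X q| := by
          rw [hcancel, abs_mul, abs_of_nonneg (by positivity : (0 : ℝ) ≤ q + 1)]
      _ ≤ (q + 1) * Γ ^ (q + 1) := by gcongr; exact hX q hq
      _ ≤ q ! * √2 ^ (q + 1) * Γ ^ (q + 1) := by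
          gcongr; exact succ_le_factorial_mul_sqrt_two_pow q
      _ = q ! * (√2 * Γ) ^ (q + 1) := by ring
  · simp only [zero_mul, mul_zero, abs_zero]
    positivity

theorem tsum_shift_le_two_mul_pow {a : ℕ → ℝ} {x : ℝ} (hx0 : 0 ≤ x) (hx : x ≤ 1 / 2)
    (ha : ∀ n, |a n| ≤ x ^ n) (N : ℕ) : ∑' i, a (i + N) ≤ 2 * x ^ N := by
  have hx1 : x < 1 := hx.trans_lt (by norm_num)
  have hgeo : Summable fun i => x ^ N * x ^ i :=
    (summable_geometric_of_lt_one hx0 hx1).mul_left _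
  have hbound (i : ℕ) : |a (i + N)| ≤ x ^ N * x ^ i := by
    rw [← pow_add, add_comm N]; exact ha _
  have hsum : Summable fun i => a (i + N) := .of_norm_bounded hgeo hbound
  calc ∑' i, a (i + N) ≤ ∑' i, x ^ N * x ^ i :=
        hsum.tsum_le_tsum (fun i => (le_abs_self _).trans (hbound i)) hgeo
    _ = x ^ N * (1 - x)⁻¹ := by rw [tsum_mul_left, tsum_geometric_of_lt_one hx0 hx1]
    _ ≤ x ^ N * 2 := by
        gcongr
        rw [inv_le_comm₀ (by linarith) two_pos]
        linarith
    _ = 2 * x ^ N := mul_comm _ _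

theorem stmt11_general (k : ℕ) (Γ : ℝ) (hΓ : 0 ≤ Γ)
    (X : ℕ → ℝ) (hX0 : ∀ p ≤ 2 * k, 0 ≤ X p) (hX : ∀ p ≤ 2 * k, X p ≤ Γ ^ (p + 1))
    (f : ℝ → ℝ)
    (hf : ∀ t, f t = Real.exp (∑ p ∈ Finset.range (2 * k + 1),
        X p / (Nat.factorial p : ℝ) * t ^ (p + 1)))
    (t : ℝ) (ht : 0 ≤ t) (ht2 : Real.sqrt 2 * Γ * t ≤ 1 / 2) :
    ∑' i : ℕ, iteratedDeriv (i + (2 * k + 1)) f 0 / (Nat.factorial (i + (2 * k + 1)) : ℝ)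
        * t ^ (i + (2 * k + 1))
      ≤ 2 * (Real.sqrt 2 * Γ * t) ^ (2 * k + 1) := by
  have hX_abs : ∀ p < 2 * k + 1, |X p| ≤ Γ ^ (p + 1) := fun p hp => by
    rw [abs_of_nonneg (hX0 p (by omega))]; exact hX p (by omega)
  have hderiv (n : ℕ) : |iteratedDeriv n f 0| ≤ n ! * (√2 * Γ) ^ n := by
    rw [funext hf]; exact abs_iteratedDeriv_exp_sum_le hΓ hX_abs n
  have hcoeff (n : ℕ) : |iteratedDeriv n f 0 / n ! * t ^ n| ≤ (√2 * Γ * t) ^ n := by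
    rw [abs_mul, abs_div, Nat.abs_cast, abs_of_nonneg (pow_nonneg ht n), mul_pow,
      div_mul_eq_mul_div, div_le_iff₀ (by positivity)]
    calc |iteratedDeriv n f 0| * t ^ n ≤ n ! * (√2 * Γ) ^ n * t ^ n := by gcongr; exact hderiv n
      _ = (√2 * Γ) ^ n * t ^ n * n ! := by ring
  exact tsum_shift_le_two_mul_pow (by positivity) ht2 hcoeff (2 * k + 1)

/-- tail bound for `f(t) = exp(Σ_{p=0}^{2k} (X_p/p!) t^{p+1})` when
`X_p ≤ Γ^{p+1}` and `√2 Γ t ≤ 1/2`. -/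
theorem stmt11 (k : ℕ) (hk : 1 ≤ k) (Γ : ℝ) (hΓ : 0 ≤ Γ)
    (X : ℕ → ℝ) (hX0 : ∀ p ≤ 2 * k, 0 ≤ X p) (hX : ∀ p ≤ 2 * k, X p ≤ Γ ^ (p + 1))
    (f : ℝ → ℝ)
    (hf : ∀ t, f t = Real.exp (∑ p ∈ Finset.range (2 * k + 1),
        X p / (Nat.factorial p : ℝ) * t ^ (p + 1)))
    (t : ℝ) (ht : 0 ≤ t) (ht2 : Real.sqrt 2 * Γ * t ≤ 1 / 2) :
    ∑' i : ℕ, iteratedDeriv (i + (2 * k + 1)) f 0 / (Nat.factorial (i + (2 * k + 1)) : ℝ)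
        * t ^ (i + (2 * k + 1))
      ≤ 2 * (Real.sqrt 2 * Γ * t) ^ (2 * k + 1) :=
  stmt11_general k Γ hΓ X hX0 hX f hf t ht ht2

end
end

section
/- Let H = Σ_{j=1}^m H_j where the family {H_j} of maps ℝ → Matrix n n ℂ is Λ-2k-smooth on [μ, μ+Δλ], let U be the ordered exponential generated by H, and suppose ‖U(x,y)‖ ≤ 1 for all μ ≤ y ≤ x ≤ μ+Δλ. Then ‖U(μ+Δλ, μ) − Σ_{p=0}^{2k} (Δλ^p/p!) T_p(μ)‖ ≤ (Λ Δλ)^{2k+1}, where T_0(u) = 1 and T_{p+1}(u) = T_p(u) H(u) + T_p'(u). -/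
open scoped Matrix.Norms.L2Operator Topology

noncomputable section

variable {n : Type*} [Fintype n] [DecidableEq n]

/-!
Put `g x = U x μ`. From `g' = H g`, induction on `p` gives `g⁽ᵖ⁾ = T_p g` on `[μ, μ + Δt]`
for `p ≤ 2k + 1`, so the sum in the statement is the Taylor polynomial of degree `2k` of `g`
at `μ`, and the Lagrange remainder bound gives the error `‖T_{2k+1}‖ ‖g‖ Δt^{2k+1} / (2k+1)!`.
Unfolding the recursion, `T_p` is a sum of at most `p!` ordered products
`H^{(a₁)} ⋯ H^{(a_r)}` with `∑ (aᵢ + 1) = p`, each of norm at most `Λ^p`;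
hence `‖T_{2k+1}‖ ≤ (2k+1)! Λ^{2k+1}`, and `‖g‖ ≤ 1` by hypothesis.
-/

open Set

/-- Mathlib's `taylor_mean_remainder_bound` only gives `N!` in the denominator. -/
theorem norm_sub_taylorWithinEval_le {E : Type*} [NormedAddCommGroup E] [NormedSpace ℝ E]
    {f : ℝ → E} {a b C : ℝ} {N : ℕ} (hab : a < b)
    (hf : ∀ p ≤ N, DifferentiableOn ℝ (iteratedDerivWithin p f (Icc a b)) (Icc a b))
    (hC : ∀ y ∈ Icc a b, ‖iteratedDerivWithin (N + 1) f (Icc a b) y‖ ≤ C) :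
    ‖f b - taylorWithinEval f N (Icc a b) a b‖ ≤ C * (b - a) ^ (N + 1) / (N + 1).factorial := by
  have hcd : ContDiffOn ℝ N f (Icc a b) :=
    (contDiffOn_iff_continuousOn_differentiableOn_deriv (uniqueDiffOn_Icc hab)).2
      ⟨fun p hp => (hf p (mod_cast hp)).continuousOn, fun p hp => hf p (mod_cast hp.le)⟩
  set φ := fun t => taylorWithinEval f N (Icc a b) t b - taylorWithinEval f N (Icc a b) a b
  have hφ : ∀ t ∈ Icc a b, HasDerivWithinAt φ
      (((N.factorial : ℝ)⁻¹ * (b - t) ^ N) • iteratedDerivWithin (N + 1) f (Icc a b) t)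
      (Icc a b) t :=
    fun t ht => (hasDerivWithinAt_taylorWithinEval_at_Icc b hab ht hcd (hf N le_rfl)).sub_const _
  set B := fun t => C * ((b - a) ^ (N + 1) - (b - t) ^ (N + 1)) / (N + 1).factorial
  have hB : ∀ t, HasDerivAt B (C * (b - t) ^ N / N.factorial) t := fun t => by
    refine (((hasDerivAt_const t _).sub (monomial_has_deriv_aux t b N)).const_mul C).div_const _
      |>.congr_deriv ?_
    rw [Nat.factorial_succ, Nat.cast_mul]
    field_simp
    push_cast
    ring
  have hbound : ∀ t ∈ Ico a b,
      ‖((N.factorial : ℝ)⁻¹ * (b - t) ^ N) • iteratedDerivWithin (N + 1) f (Icc a b) t‖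
        ≤ C * (b - t) ^ N / N.factorial := fun t ht => by
    have hbt : 0 ≤ b - t := by linarith [ht.2]
    rw [norm_smul, Real.norm_of_nonneg (by positivity)]
    calc (N.factorial : ℝ)⁻¹ * (b - t) ^ N * ‖iteratedDerivWithin (N + 1) f (Icc a b) t‖
        ≤ (N.factorial : ℝ)⁻¹ * (b - t) ^ N * C := by gcongr; exact hC t (Ico_subset_Icc_self ht)
      _ = C * (b - t) ^ N / N.factorial := by ring
  have := image_norm_le_of_norm_deriv_right_le_deriv_boundary
    (fun t ht => (hφ t ht).continuousWithinAt)
    (fun t ht => (hφ t (Ico_subset_Icc_self ht)).mono_of_mem_nhdsWithin (Icc_mem_nhdsGE_of_mem ht))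
    (by simp [φ, B]) hB hbound (right_mem_Icc.2 hab.le)
  simpa [φ, B, taylorWithinEval_self] using this

/-- A word `[a₁, …, a_r]` stands for the product `F a₁ ⋯ F a_r` of derivatives `F a = F⁽ᵃ⁾`;
differentiating it by the Leibniz rule raises one letter by one. -/
def wordDeriv : List ℕ → List (List ℕ)
  | [] => []
  | a :: w => ((a + 1) :: w) :: (wordDeriv w).map (a :: ·)

/-- The words of `T_p`, following `T_{p+1} = T_p F⁽⁰⁾ + T_p'`. -/
def tseqWords : ℕ → List (List ℕ)
  | 0 => [[]]
  | p + 1 => (tseqWords p).map (· ++ [0]) ++ (tseqWords p).flatMap wordDeriv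

theorem length_wordDeriv (w : List ℕ) : (wordDeriv w).length = w.length := by
  induction w with
  | nil => rfl
  | cons a w ih => simp [wordDeriv, ih]

theorem sum_add_length_of_mem_wordDeriv {w v : List ℕ} (hv : v ∈ wordDeriv w) :
    v.sum + v.length = w.sum + w.length + 1 := by
  induction w generalizing v with
  | nil => simp [wordDeriv] at hv
  | cons a w ih =>
    simp only [wordDeriv, List.mem_cons, List.mem_map] at hv
    rcases hv with rfl | ⟨v, hv, rfl⟩
    · simp only [List.sum_cons, List.length_cons]; omega
    · have := ih hv
      simp only [List.sum_cons, List.length_cons]; omega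

theorem sum_add_length_of_mem_tseqWords {p : ℕ} {w : List ℕ} (hw : w ∈ tseqWords p) :
    w.sum + w.length = p := by
  induction p generalizing w with
  | zero => simp_all [tseqWords]
  | succ p ih =>
    simp only [tseqWords, List.mem_append, List.mem_map, List.mem_flatMap] at hw
    rcases hw with ⟨v, hv, rfl⟩ | ⟨v, hv, hw⟩
    · have := ih hv
      simp only [List.sum_append, List.length_append, List.sum_singleton, List.length_singleton]
      omega
    · rw [sum_add_length_of_mem_wordDeriv hw, ih hv]

theorem lt_of_mem_of_mem_tseqWords {p a : ℕ} {w : List ℕ} (hw : w ∈ tseqWords p)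
    (ha : a ∈ w) : a < p := by
  have hlen : 0 < w.length := List.length_pos_of_mem ha
  have := List.le_sum_of_mem ha
  have := sum_add_length_of_mem_tseqWords hw
  omega

theorem length_tseqWords_le_factorial (p : ℕ) : (tseqWords p).length ≤ p.factorial := by
  induction p with
  | zero => simp [tseqWords]
  | succ p ih =>
    have hderiv : ((tseqWords p).flatMap wordDeriv).length ≤ (tseqWords p).length * p := by
      rw [List.length_flatMap, ← smul_eq_mul, ← List.length_map (f := List.length ∘ wordDeriv)]
      refine List.sum_le_card_nsmul _ p fun l hl => ?_
      obtain ⟨w, hw, rfl⟩ := List.mem_map.1 hl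
      have := sum_add_length_of_mem_tseqWords hw
      simp only [length_wordDeriv]
      omega
    simp only [tseqWords, List.length_append, List.length_map, Nat.factorial_succ]
    nlinarith

section WordEval

variable {A : Type*} [NormedRing A]

def wordEval (F : ℕ → ℝ → A) (w : List ℕ) (u : ℝ) : A := (w.map (F · u)).prod

def wordsEval (F : ℕ → ℝ → A) (L : List (List ℕ)) (u : ℝ) : A :=
  (L.map (wordEval F · u)).sum

@[simp] theorem wordEval_nil (F : ℕ → ℝ → A) : wordEval F [] = 1 := rfl

@[simp] theorem wordEval_cons (F : ℕ → ℝ → A) (a : ℕ) (w : List ℕ) (u : ℝ) :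
    wordEval F (a :: w) u = F a u * wordEval F w u := List.prod_cons

@[simp] theorem wordEval_append (F : ℕ → ℝ → A) (w v : List ℕ) (u : ℝ) :
    wordEval F (w ++ v) u = wordEval F w u * wordEval F v u := by
  simp [wordEval]

@[simp] theorem wordsEval_nil (F : ℕ → ℝ → A) : wordsEval F [] = 0 := rfl

@[simp] theorem wordsEval_cons (F : ℕ → ℝ → A) (w : List ℕ) (L : List (List ℕ)) (u : ℝ) :
    wordsEval F (w :: L) u = wordEval F w u + wordsEval F L u := List.sum_cons

@[simp] theorem wordsEval_append (F : ℕ → ℝ → A) (L L' : List (List ℕ)) (u : ℝ) :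
    wordsEval F (L ++ L') u = wordsEval F L u + wordsEval F L' u := by
  simp [wordsEval]

theorem wordsEval_map_cons (F : ℕ → ℝ → A) (a : ℕ) (L : List (List ℕ)) (u : ℝ) :
    wordsEval F (L.map (a :: ·)) u = F a u * wordsEval F L u := by
  simp [wordsEval, Function.comp_def, List.sum_map_mul_left]

theorem wordsEval_map_append (F : ℕ → ℝ → A) (L : List (List ℕ)) (v : List ℕ) (u : ℝ) :
    wordsEval F (L.map (· ++ v)) u = wordsEval F L u * wordEval F v u := by
  simp [wordsEval, Function.comp_def, List.sum_map_mul_right]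

theorem norm_wordEval_le [NormOneClass A] {F : ℕ → ℝ → A} {u Λ : ℝ} (hΛ : 0 ≤ Λ) {w : List ℕ}
    (hF : ∀ a ∈ w, ‖F a u‖ ≤ Λ ^ (a + 1)) :
    ‖wordEval F w u‖ ≤ Λ ^ (w.sum + w.length) := by
  induction w with
  | nil => simp
  | cons a w ih =>
    calc ‖wordEval F (a :: w) u‖ ≤ ‖F a u‖ * ‖wordEval F w u‖ := by
          rw [wordEval_cons]; exact norm_mul_le _ _
      _ ≤ Λ ^ (a + 1) * Λ ^ (w.sum + w.length) := by
          gcongr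
          · exact hF a List.mem_cons_self
          · exact ih fun b hb => hF b (List.mem_cons_of_mem a hb)
      _ = Λ ^ ((a :: w).sum + (a :: w).length) := by
          rw [← pow_add, List.sum_cons, List.length_cons]
          congr 1
          omega

variable [NormedAlgebra ℝ A]

def HasDerivTowerOn (F : ℕ → ℝ → A) (N : ℕ) (s : Set ℝ) : Prop :=
  ∀ a < N, ∀ u ∈ s, HasDerivWithinAt (F a) (F (a + 1) u) s u

variable {F : ℕ → ℝ → A} {N : ℕ} {s : Set ℝ} {u : ℝ}

theorem HasDerivTowerOn.hasDerivWithinAt_wordEval (hF : HasDerivTowerOn F N s) {w : List ℕ}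
    (hw : ∀ a ∈ w, a < N) (hu : u ∈ s) :
    HasDerivWithinAt (wordEval F w) (wordsEval F (wordDeriv w) u) s u := by
  induction w with
  | nil => exact hasDerivWithinAt_const u s 1
  | cons a w ih =>
    have hprod := (hF a (hw a List.mem_cons_self) u hu).mul
      (ih fun b hb => hw b (List.mem_cons_of_mem a hb))
    rw [show wordEval F (a :: w) = F a * wordEval F w from funext (wordEval_cons F a w)]
    convert hprod using 1
    simp [wordDeriv, wordsEval_map_cons]

theorem HasDerivTowerOn.hasDerivWithinAt_wordsEval (hF : HasDerivTowerOn F N s)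
    {L : List (List ℕ)} (hL : ∀ w ∈ L, ∀ a ∈ w, a < N) (hu : u ∈ s) :
    HasDerivWithinAt (wordsEval F L) (wordsEval F (L.flatMap wordDeriv) u) s u := by
  induction L with
  | nil => exact hasDerivWithinAt_const u s 0
  | cons w L ih =>
    have hsum := (hF.hasDerivWithinAt_wordEval (hL w List.mem_cons_self) hu).add
      (ih fun v hv => hL v (List.mem_cons_of_mem w hv))
    rw [show wordsEval F (w :: L) = wordEval F w + wordsEval F L from
      funext (wordsEval_cons F w L), List.flatMap_cons, wordsEval_append]
    exact hsum

end WordEval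

theorem PSmoothOn.hasDerivTowerOn_sum {m : ℕ} {Hs : Fin m → ℝ → Matrix n n ℂ} {P : ℕ}
    {a b : ℝ} (h : PSmoothOn Hs P a b) :
    HasDerivTowerOn (fun p u => ∑ j, iteratedDerivWithin p (Hs j) (Icc a b) u) P (Icc a b) :=
  fun p hp u hu => HasDerivWithinAt.fun_sum fun j _ => by
    simpa only [iteratedDerivWithin_succ] using (h j p hp u hu).hasDerivWithinAt

variable {H : ℝ → Matrix n n ℂ} {s : Set ℝ} {F : ℕ → ℝ → Matrix n n ℂ} {N : ℕ}

theorem eqOn_tseq_wordsEval (hs : UniqueDiffOn ℝ s) (hF0 : EqOn (F 0) H s)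
    (hF : HasDerivTowerOn F N s) {p : ℕ} (hp : p ≤ N + 1) :
    EqOn (Tseq H s p) (wordsEval F (tseqWords p)) s := by
  induction p with
  | zero => intro u _; simp [Tseq, tseqWords]
  | succ p ih =>
    intro u hu
    have ih := ih (by omega)
    have hletters : ∀ w ∈ tseqWords p, ∀ a ∈ w, a < N :=
      fun w hw a ha => (lt_of_mem_of_mem_tseqWords hw ha).trans_le (by omega)
    have hderiv :
        derivWithin (Tseq H s p) s u = wordsEval F ((tseqWords p).flatMap wordDeriv) u := by
      rw [derivWithin_congr ih (ih hu)]
      exact (hF.hasDerivWithinAt_wordsEval hletters hu).derivWithin (hs u hu)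
    simp only [Tseq, tseqWords, wordsEval_append, wordsEval_map_append, hderiv, ih hu, ← hF0 hu]
    simp [wordEval]

theorem differentiableWithinAt_tseq (hs : UniqueDiffOn ℝ s) (hF0 : EqOn (F 0) H s)
    (hF : HasDerivTowerOn F N s) {p : ℕ} (hp : p ≤ N) {u : ℝ} (hu : u ∈ s) :
    DifferentiableWithinAt ℝ (Tseq H s p) s u := by
  have hletters : ∀ w ∈ tseqWords p, ∀ a ∈ w, a < N :=
    fun w hw a ha => (lt_of_mem_of_mem_tseqWords hw ha).trans_le hp
  have heq := eqOn_tseq_wordsEval hs hF0 hF (p := p) (by omega)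
  exact (hF.hasDerivWithinAt_wordsEval hletters hu).differentiableWithinAt.congr heq (heq hu)

theorem norm_tseq_le [Nonempty n] (hs : UniqueDiffOn ℝ s) (hF0 : EqOn (F 0) H s)
    (hF : HasDerivTowerOn F N s) {Λ : ℝ} (hΛ : 0 ≤ Λ)
    (hFnorm : ∀ a ≤ N, ∀ u ∈ s, ‖F a u‖ ≤ Λ ^ (a + 1)) {p : ℕ} (hp : p ≤ N + 1) {u : ℝ}
    (hu : u ∈ s) : ‖Tseq H s p u‖ ≤ p.factorial * Λ ^ p := by
  have hword : ∀ w ∈ tseqWords p, ‖wordEval F w u‖ ≤ Λ ^ p := fun w hw => by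
    rw [← sum_add_length_of_mem_tseqWords hw]
    refine norm_wordEval_le hΛ fun a ha => hFnorm a ?_ u hu
    have := lt_of_mem_of_mem_tseqWords hw ha
    omega
  calc ‖Tseq H s p u‖ = ‖wordsEval F (tseqWords p) u‖ := by
        rw [eqOn_tseq_wordsEval hs hF0 hF hp hu]
    _ ≤ (((tseqWords p).map (wordEval F · u)).map norm).sum :=
        List.le_sum_of_subadditive _ norm_zero.le norm_add_le _
    _ ≤ (tseqWords p).length * Λ ^ p := by
        simpa using List.sum_le_card_nsmul (((tseqWords p).map (wordEval F · u)).map norm) (Λ ^ p)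
          (by simpa using hword)
    _ ≤ p.factorial * Λ ^ p := by
        gcongr
        exact_mod_cast length_tseqWords_le_factorial p

theorem eqOn_iteratedDerivWithin_tseq_mul (hs : UniqueDiffOn ℝ s) (hF0 : EqOn (F 0) H s)
    (hF : HasDerivTowerOn F N s) {g : ℝ → Matrix n n ℂ}
    (hg : ∀ u ∈ s, HasDerivWithinAt g (H u * g u) s u) {p : ℕ} (hp : p ≤ N + 1) :
    EqOn (iteratedDerivWithin p g s) (fun u => Tseq H s p u * g u) s := by
  induction p with
  | zero => intro u _; simp [Tseq]
  | succ p ih =>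
    intro u hu
    have ih := ih (by omega)
    have hT := (differentiableWithinAt_tseq hs hF0 hF (p := p) (by omega) hu).hasDerivWithinAt
    rw [iteratedDerivWithin_succ, derivWithin_congr ih (ih hu),
      (hT.fun_mul (hg u hu)).derivWithin (hs u hu)]
    simp only [Tseq]
    noncomm_ring

theorem differentiableOn_iteratedDerivWithin_of_hasDerivWithinAt_mul (hs : UniqueDiffOn ℝ s)
    (hF0 : EqOn (F 0) H s) (hF : HasDerivTowerOn F N s) {g : ℝ → Matrix n n ℂ}
    (hg : ∀ u ∈ s, HasDerivWithinAt g (H u * g u) s u) {p : ℕ} (hp : p ≤ N) :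
    DifferentiableOn ℝ (iteratedDerivWithin p g s) s := fun u hu => by
  have heq := eqOn_iteratedDerivWithin_tseq_mul hs hF0 hF hg (p := p) (by omega)
  exact ((differentiableWithinAt_tseq hs hF0 hF hp hu).mul
    (hg u hu).differentiableWithinAt).congr heq (heq hu)

theorem norm_sub_sum_tseq_le [Nonempty n] {a b Λ : ℝ} (hab : a < b) (hF0 : EqOn (F 0) H (Icc a b))
    (hF : HasDerivTowerOn F N (Icc a b)) (hΛ : 0 ≤ Λ)
    (hFnorm : ∀ p ≤ N, ∀ u ∈ Icc a b, ‖F p u‖ ≤ Λ ^ (p + 1)) {g : ℝ → Matrix n n ℂ}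
    (hg : ∀ u ∈ Icc a b, HasDerivWithinAt g (H u * g u) (Icc a b) u) (hga : g a = 1)
    (hgnorm : ∀ u ∈ Icc a b, ‖g u‖ ≤ 1) :
    ‖g b - ∑ p ∈ Finset.range (N + 1),
        ((b - a) ^ p / p.factorial) • Tseq H (Icc a b) p a‖ ≤ (Λ * (b - a)) ^ (N + 1) := by
  have hs := uniqueDiffOn_Icc hab
  have hderiv := fun p (hp : p ≤ N + 1) => eqOn_iteratedDerivWithin_tseq_mul hs hF0 hF hg hp
  have hbound : ∀ u ∈ Icc a b, ‖iteratedDerivWithin (N + 1) g (Icc a b) u‖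
      ≤ (N + 1).factorial * Λ ^ (N + 1) := fun u hu => by
    rw [hderiv _ le_rfl hu, ← mul_one ((N + 1).factorial * Λ ^ (N + 1) : ℝ)]
    exact (norm_mul_le _ _).trans (mul_le_mul (norm_tseq_le hs hF0 hF hΛ hFnorm le_rfl hu)
      (hgnorm u hu) (norm_nonneg _) (by positivity))
  have htaylor := norm_sub_taylorWithinEval_le hab
    (fun p hp => differentiableOn_iteratedDerivWithin_of_hasDerivWithinAt_mul hs hF0 hF hg hp)
    hbound
  have hpoly : taylorWithinEval g N (Icc a b) a b =
      ∑ p ∈ Finset.range (N + 1), ((b - a) ^ p / p.factorial) • Tseq H (Icc a b) p a := by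
    refine (taylor_within_apply _ _ _ _ _).trans (Finset.sum_congr rfl fun p hp => ?_)
    simp only [hderiv p (by grind) (left_mem_Icc.2 hab.le), hga, mul_one, div_eq_inv_mul]
  rw [← hpoly]
  refine htaylor.trans_eq ?_
  rw [mul_pow]
  field_simp

theorem stmt13_general {n : Type*} [Fintype n] [DecidableEq n]
    {m : ℕ} (Hs : Fin m → ℝ → Matrix n n ℂ)
    (H : ℝ → Matrix n n ℂ) (hHsum : ∀ u, H u = ∑ j, Hs j u)
    (U : ℝ → ℝ → Matrix n n ℂ) (hU : IsOrderedExp H U)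
    (k : ℕ) (Λ μ Δt : ℝ) (hΔt : 0 < Δt)
    (hsmooth : LambdaSmoothOn Hs Λ (2 * k) μ (μ + Δt))
    (hUnorm : ∀ x y : ℝ, μ ≤ y → y ≤ x → x ≤ μ + Δt → ‖U x y‖ ≤ 1) :
    ‖U (μ + Δt) μ - ∑ p ∈ Finset.range (2 * k + 1),
        (Δt ^ p / (Nat.factorial p : ℝ)) • Tseq H (Set.Icc μ (μ + Δt)) p μ‖
      ≤ (Λ * Δt) ^ (2 * k + 1) := by
  obtain ⟨hPsmooth, hΛ, hΛbound⟩ := hsmooth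
  cases isEmpty_or_nonempty n
  · rw [Subsingleton.elim (U (μ + Δt) μ - _) 0, norm_zero]
    positivity
  have hF0 : EqOn (fun u => ∑ j, iteratedDerivWithin 0 (Hs j) (Icc μ (μ + Δt)) u) H
      (Icc μ (μ + Δt)) := fun u _ => by simp [hHsum]
  simpa only [add_sub_cancel_left] using norm_sub_sum_tseq_le (by linarith) hF0
    hPsmooth.hasDerivTowerOn_sum hΛ
    (fun p hp u hu => (norm_sum_le _ _).trans (hΛbound p hp u hu))
    (fun u _ => (hU.2 u μ).hasDerivWithinAt) (hU.1 μ) (fun u hu => hUnorm u μ le_rfl hu.1 hu.2)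

/-- `‖U(μ+Δt, μ) - Σ_{p=0}^{2k} (Δt^p/p!) T_p(μ)‖ ≤ (ΛΔt)^{2k+1}` for a
`Λ`-`2k`-smooth family with `‖U‖ ≤ 1` on the interval. -/
theorem stmt13 {n : Type*} [Fintype n] [DecidableEq n]
    {m : ℕ} (hm : 1 ≤ m) (Hs : Fin m → ℝ → Matrix n n ℂ)
    (H : ℝ → Matrix n n ℂ) (hHsum : ∀ u, H u = ∑ j, Hs j u) (hHcont : Continuous H)
    (U : ℝ → ℝ → Matrix n n ℂ) (hU : IsOrderedExp H U)
    (k : ℕ) (Λ μ Δt : ℝ) (hΔt : 0 < Δt)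
    (hsmooth : LambdaSmoothOn Hs Λ (2 * k) μ (μ + Δt))
    (hUnorm : ∀ x y : ℝ, μ ≤ y → y ≤ x → x ≤ μ + Δt → ‖U x y‖ ≤ 1) :
    ‖U (μ + Δt) μ - ∑ p ∈ Finset.range (2 * k + 1),
        (Δt ^ p / (Nat.factorial p : ℝ)) • Tseq H (Set.Icc μ (μ + Δt)) p μ‖
      ≤ (Λ * Δt) ^ (2 * k + 1) :=
  stmt13_general Hs H hHsum U hU k Λ μ Δt hΔt hsmooth hUnorm

end
end
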